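/- For every positive integer n, the maximum of the down degree over S_n equals ⌊n²/4⌋; in particular the permutation π = [⌊n/2⌋+1, ⌊n/2⌋+2, ..., n, 1, 2, ..., ⌊n/2⌋] satisfies d_−(π) = ⌊n²/4⌋. -/

import Mathlib

open Equiv Finset

/-- Number of inversions (Coxeter length) of a permutation of `Fin n`. -/
def invNum {n : ℕ} (π : Equiv.Perm (Fin n)) : ℕ :=
  (Finset.univ.filter (fun p : Fin n × Fin n => p.1 < p.2 ∧ π p.2 < π p.1)).card

/-- Down degree: number of transpositions `t_{a,b}` with `ℓ(t_{a,b} π) = ℓ(π) - 1`. -/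
def downDeg {n : ℕ} (π : Equiv.Perm (Fin n)) : ℕ :=
  (Finset.univ.filter (fun p : Fin n × Fin n =>
    p.1 < p.2 ∧ invNum (Equiv.swap p.1 p.2 * π) + 1 = invNum π)).card

/-- Total degree: number of transpositions `t_{a,b}` with `ℓ(t_{a,b} π) = ℓ(π) ± 1`. -/
def totalDeg {n : ℕ} (π : Equiv.Perm (Fin n)) : ℕ :=
  (Finset.univ.filter (fun p : Fin n × Fin n =>
    p.1 < p.2 ∧ (invNum (Equiv.swap p.1 p.2 * π) + 1 = invNum π ∨
      invNum (Equiv.swap p.1 p.2 * π) = invNum π + 1))).card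

/-!
Swapping the entries at positions `i < j` of `f` with `f i < f j` creates exactly `1 + 2m` new
inversions, `m` being the number of `k ∈ (i, j)` with `f i < f k < f j`. Applied to `σ⁻¹`, this
says that `t_{a,b}` (`a < b`) is a down step of `σ` iff `b` stands left of `a` in `σ` and no value
of `(a, b)` stands between them. For `a < b < c` the three pairs cannot all be down steps, since
`b` would stand between `c` and `a`; so the down steps form a triangle-free graph and Mantel's
theorem gives `d_−(σ) ≤ ⌊n²/4⌋`. For the rotation by `m` the down steps are exactly the pairs
`a < m ≤ b` (0-indexed), so `d_−(π) = m (n - m)`, which is `⌊n²/4⌋` for `m = ⌊n/2⌋`.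
-/

theorem Nat.div_two_mul_sub_div_two (n : ℕ) : n / 2 * (n - n / 2) = n ^ 2 / 4 := by
  obtain ⟨k, rfl | rfl⟩ := n.even_or_odd'
  · rw [show 2 * k / 2 = k by omega, show 2 * k - k = k by omega,
      show (2 * k) ^ 2 = 4 * (k * k) by ring]
    omega
  · rw [show (2 * k + 1) / 2 = k by omega, show 2 * k + 1 - k = k + 1 by omega,
      show (2 * k + 1) ^ 2 = 4 * (k * (k + 1)) + 1 by ring]
    omega

namespace SimpleGraph
variable {V : Type*} {G : SimpleGraph V}

theorem CliqueFree.card_edgeFinset_le_card_sq_div_four [Fintype V] [DecidableRel G.Adj]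
    (hG : G.CliqueFree 3) : #G.edgeFinset ≤ Fintype.card V ^ 2 / 4 := by
  refine (hG.card_edgeFinset_le (r := 2)).trans_eq ?_
  obtain ⟨k, hk | hk⟩ := (Fintype.card V).even_or_odd'
  · simp [hk]
  · rw [hk, Nat.mul_add_mod_self_left, show (2 * k + 1) ^ 2 = 4 * (k * (k + 1)) + 1 by ring]
    norm_num
    omega

theorem card_edgeFinset_eq_card_filter_lt [Fintype V] [DecidableRel G.Adj] [LinearOrder V] :
    #G.edgeFinset = #{p : V × V | p.1 < p.2 ∧ G.Adj p.1 p.2} := by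
  refine (card_bij' (fun p _ => s(p.1, p.2)) (fun e _ => (e.inf, e.sup)) ?_ ?_ ?_ ?_).symm
  · intro p hp
    exact mem_edgeFinset.2 ((mem_filter_univ _).1 hp).2
  · intro e he
    induction e using Sym2.ind with | _ x y
    have hxy : G.Adj x y := mem_edgeFinset.1 he
    rcases lt_or_gt_of_ne (G.ne_of_adj hxy) with h | h
    · simpa [h.le] using ⟨h, hxy⟩
    · simpa [h.le] using ⟨h, hxy.symm⟩
  · intro p hp
    simp [((mem_filter_univ _).1 hp).1.le]
  · intro e _
    induction e using Sym2.ind with | _ x y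
    rcases le_total x y with h | h <;> simp [h, Sym2.eq_swap]

theorem cliqueFree_three_of_lt [LinearOrder V]
    (h : ∀ a b c, a < b → b < c → G.Adj a b → G.Adj b c → ¬ G.Adj a c) : G.CliqueFree 3 := by
  intro s hs
  obtain ⟨a, b, c, hab, hac, hbc, -⟩ := is3Clique_iff.1 hs
  rcases lt_or_gt_of_ne (G.ne_of_adj hab) with h1 | h1 <;>
  rcases lt_or_gt_of_ne (G.ne_of_adj hac) with h2 | h2 <;>
  rcases lt_or_gt_of_ne (G.ne_of_adj hbc) with h3 | h3
  all_goals grind [G.adj_comm]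
end SimpleGraph

section Inversions

variable {n : ℕ}

theorem invNum_inv (σ : Perm (Fin n)) : invNum σ⁻¹ = invNum σ :=
  card_equiv ((Equiv.prodComm _ _).trans (σ⁻¹.prodCongr σ⁻¹)) fun p => by
    simp [and_comm]

theorem invNum_swap_mul (σ : Perm (Fin n)) (a b : Fin n) :
    invNum (swap a b * σ) = invNum (σ⁻¹ * swap a b) := by
  rw [← invNum_inv, mul_inv_rev, swap_inv]

def flipPairs (i j : Fin n) : Finset (Fin n × Fin n) :=
  {p | p.1 < p.2 ∧ swap i j p.2 < swap i j p.1}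

theorem mem_flipPairs {i j : Fin n} (hij : i < j) {p : Fin n × Fin n} :
    p ∈ flipPairs i j ↔ p.1 = i ∧ i < p.2 ∧ p.2 ≤ j ∨ i < p.1 ∧ p.1 < j ∧ p.2 = j := by
  rw [flipPairs, mem_filter_univ, swap_apply_def, swap_apply_def]
  simp only [Fin.lt_def, Fin.le_def, Fin.ext_iff] at *
  split_ifs <;> omega

theorem sum_flipPairs {M : Type*} [AddCommMonoid M] {i j : Fin n} (hij : i < j)
    (g : Fin n × Fin n → M) :
    ∑ p ∈ flipPairs i j, g p = g (i, j) + ∑ k ∈ Ioo i j, (g (i, k) + g (k, j)) := by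
  have hsplit : flipPairs i j =
      (Ioc i j).map (.sectR i _) ∪ (Ioo i j).map (.sectL _ j) := by
    ext p
    simp only [mem_flipPairs hij, mem_union, mem_map, mem_Ioc, mem_Ioo,
      Function.Embedding.sectR_apply, Function.Embedding.sectL_apply]
    aesop
  rw [hsplit, sum_union, sum_map, sum_map, ← Ioo_insert_right hij, sum_insert, sum_add_distrib]
  · simp [add_assoc]
  · simp
  · simp only [disjoint_left, mem_map, mem_Ioc, mem_Ioo,
      Function.Embedding.sectR_apply, Function.Embedding.sectL_apply]
    aesop

/- `(p, q) ↦ (τ p, τ q)` matches the inversions of `f * τ` and of `f` on pairs that `τ` does not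
flip, and `(p, q) ↦ (τ q, τ p)` maps the flipped pairs to themselves, exchanging inversions of
`f * τ` with non-inversions of `f`. -/
theorem invNum_mul_swap_add_card (f : Perm (Fin n)) (i j : Fin n) :
    invNum (f * swap i j) + #{p ∈ flipPairs i j | f p.2 < f p.1} =
      invNum f + #{p ∈ flipPairs i j | f p.1 < f p.2} := by
  set τ := swap i j
  have card_split (C : Fin n × Fin n → Prop) [DecidablePred C] :
      #{p : Fin n × Fin n | p.1 < p.2 ∧ C p} =
        #{p : Fin n × Fin n | p.1 < p.2 ∧ ¬ τ p.2 < τ p.1 ∧ C p} + #{p ∈ flipPairs i j | C p} := by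
    rw [← card_filter_add_card_filter_not (fun p : Fin n × Fin n => ¬ τ p.2 < τ p.1)]
    congr 2 <;> ext p <;>
      simp only [not_lt, not_le, mem_filter, mem_univ, true_and, flipPairs, τ] <;> tauto
  have unflipped : #{p : Fin n × Fin n | p.1 < p.2 ∧ ¬ τ p.2 < τ p.1 ∧ f (τ p.2) < f (τ p.1)} =
      #{p : Fin n × Fin n | p.1 < p.2 ∧ ¬ τ p.2 < τ p.1 ∧ f p.2 < f p.1} :=
    card_equiv (τ.prodCongr τ) fun p => by
      simp only [mem_filter_univ, prodCongr_apply, Prod.map_fst, Prod.map_snd, τ, swap_apply_self]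
      grind
  have flipped : #{p ∈ flipPairs i j | f (τ p.2) < f (τ p.1)} =
      #{p ∈ flipPairs i j | f p.1 < f p.2} :=
    card_equiv ((Equiv.prodComm _ _).trans (τ.prodCongr τ)) fun p => by
      simp [flipPairs, τ, and_comm]
  change #{p : Fin n × Fin n | p.1 < p.2 ∧ f (τ p.2) < f (τ p.1)} + _ =
    #{p : Fin n × Fin n | p.1 < p.2 ∧ f p.2 < f p.1} + _
  rw [card_split fun p => f (τ p.2) < f (τ p.1), card_split fun p => f p.2 < f p.1, unflipped,
    flipped]
  ring

theorem invNum_mul_swap {f : Perm (Fin n)} {i j : Fin n} (hij : i < j) (hf : f i < f j) :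
    invNum (f * swap i j) = invNum f + 2 * #{k ∈ Ioo i j | f i < f k ∧ f k < f j} + 1 := by
  have h := invNum_mul_swap_add_card f i j
  have pointwise : ∀ k ∈ Ioo i j,
      (if f i < f k then 1 else 0) + (if f k < f j then 1 else 0) =
        2 * (if f i < f k ∧ f k < f j then 1 else 0) +
          ((if f k < f i then 1 else 0) + (if f j < f k then 1 else 0)) := by
    intro k hk
    obtain ⟨hik, hkj⟩ := mem_Ioo.1 hk
    have hki : f k ≠ f i := f.injective.ne hik.ne'
    have hkj : f k ≠ f j := f.injective.ne hkj.ne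
    simp only [Fin.lt_def, ne_eq, Fin.ext_iff] at hki hkj ⊢
    split_ifs <;> omega
  simp only [card_filter, sum_flipPairs hij] at h ⊢
  rw [sum_congr rfl pointwise, if_neg (not_lt.2 hf.le), if_pos hf] at h
  simp only [sum_add_distrib, ← mul_sum] at h
  omega

theorem invNum_mul_swap_add_one_eq_iff {f : Perm (Fin n)} {i j : Fin n} (hij : i < j) :
    invNum (f * swap i j) + 1 = invNum f ↔
      f j < f i ∧ ∀ k ∈ Ioo i j, ¬ (f j < f k ∧ f k < f i) := by
  rcases lt_or_gt_of_ne (f.injective.ne hij.ne) with h | h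
  · rw [invNum_mul_swap hij h]
    simp only [h.not_gt, false_and, iff_false]
    omega
  · set g := f * swap i j
    have hg : g i < g j := by simpa [g] using h
    have hgf : g * swap i j = f := by simp [g, mul_assoc]
    have hmid : {k ∈ Ioo i j | g i < g k ∧ g k < g j} = {k ∈ Ioo i j | f j < f k ∧ f k < f i} := by
      refine filter_congr fun k hk => ?_
      obtain ⟨hik, hkj⟩ := mem_Ioo.1 hk
      simp [g, swap_apply_of_ne_of_ne hik.ne' hkj.ne]
    have key := invNum_mul_swap hij hg
    rw [hgf, hmid] at key
    rw [← filter_eq_empty_iff, ← card_eq_zero]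
    simp only [h, true_and]
    omega

theorem invNum_swap_mul_add_one_eq_iff {σ : Perm (Fin n)} {a b : Fin n} (hab : a < b) :
    invNum (swap a b * σ) + 1 = invNum σ ↔
      σ⁻¹ b < σ⁻¹ a ∧ ∀ c ∈ Ioo a b, ¬ (σ⁻¹ b < σ⁻¹ c ∧ σ⁻¹ c < σ⁻¹ a) := by
  rw [invNum_swap_mul, ← invNum_inv σ, invNum_mul_swap_add_one_eq_iff hab]

end Inversions

section DownGraph

variable {n : ℕ}

def downGraph (σ : Perm (Fin n)) : SimpleGraph (Fin n) where
  Adj a b := invNum (swap a b * σ) + 1 = invNum σ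
  symm.symm a b h := by rwa [swap_comm]
  loopless.irrefl a h := by rw [swap_self, ← Perm.one_def, one_mul] at h; omega

instance (σ : Perm (Fin n)) : DecidableRel (downGraph σ).Adj :=
  fun a b => inferInstanceAs (Decidable (invNum (swap a b * σ) + 1 = invNum σ))

theorem downDeg_eq_card_edgeFinset (σ : Perm (Fin n)) :
    downDeg σ = #(downGraph σ).edgeFinset := by
  rw [SimpleGraph.card_edgeFinset_eq_card_filter_lt]
  rfl

theorem downGraph_cliqueFree_three (σ : Perm (Fin n)) : (downGraph σ).CliqueFree 3 := by
  refine SimpleGraph.cliqueFree_three_of_lt fun a b c hab hbc hab' hbc' hac' => ?_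
  have h₁ := ((invNum_swap_mul_add_one_eq_iff hab).1 hab').1
  have h₂ := ((invNum_swap_mul_add_one_eq_iff hbc).1 hbc').1
  exact ((invNum_swap_mul_add_one_eq_iff (hab.trans hbc)).1 hac').2 b (mem_Ioo.2 ⟨hab, hbc⟩)
    ⟨h₂, h₁⟩

theorem downDeg_le (σ : Perm (Fin n)) : downDeg σ ≤ n ^ 2 / 4 := by
  simpa [downDeg_eq_card_edgeFinset] using
    (downGraph_cliqueFree_three σ).card_edgeFinset_le_card_sq_div_four

end DownGraph

section Rotation

variable {n m : ℕ} {π : Perm (Fin n)}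

theorem rotation_inv_val (hm : m ≤ n) (hπ : ∀ i : Fin n, (π i : ℕ) = (i + m) % n) (v : Fin n) :
    (π⁻¹ v : ℕ) = if (v : ℕ) < m then v + (n - m) else v - m := by
  have hv : (v : ℕ) = (π⁻¹ v + m) % n := by
    rw [← hπ, ← Perm.mul_apply, mul_inv_cancel, Perm.one_apply]
  have hu := (π⁻¹ v).isLt
  rcases lt_or_ge ((π⁻¹ v : ℕ) + m) n with h | h
  · rw [Nat.mod_eq_of_lt h] at hv
    split_ifs <;> omega
  · rw [Nat.mod_eq_sub_mod h, Nat.mod_eq_of_lt (by omega)] at hv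
    split_ifs <;> omega

theorem rotation_downGraph_adj_iff (hm : m ≤ n) (hπ : ∀ i : Fin n, (π i : ℕ) = (i + m) % n)
    {a b : Fin n} (hab : a < b) : (downGraph π).Adj a b ↔ (a : ℕ) < m ∧ m ≤ b := by
  change invNum _ + 1 = _ ↔ _
  have hb := b.isLt
  simp only [invNum_swap_mul_add_one_eq_iff hab, Fin.lt_def, rotation_inv_val hm hπ, mem_Ioo]
  rw [Fin.lt_def] at hab
  constructor
  · rintro ⟨hba, -⟩
    split_ifs at hba <;> omega
  · rintro ⟨ha, hb⟩
    refine ⟨by split_ifs <;> omega, fun c hc => ?_⟩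
    split_ifs <;> omega

theorem downDeg_rotation (hm : m ≤ n) (hπ : ∀ i : Fin n, (π i : ℕ) = (i + m) % n) :
    downDeg π = m * (n - m) := by
  have hcross : downDeg π = #{p : Fin n × Fin n | (p.1 : ℕ) < m ∧ m ≤ (p.2 : ℕ)} := by
    refine congrArg card (filter_congr fun p _ => ?_)
    constructor
    · rintro ⟨hlt, hadj⟩
      exact (rotation_downGraph_adj_iff hm hπ hlt).1 hadj
    · rintro ⟨h₁, h₂⟩
      have hlt : p.1 < p.2 := Fin.lt_def.2 (by omega)
      exact ⟨hlt, (rotation_downGraph_adj_iff hm hπ hlt).2 ⟨h₁, h₂⟩⟩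
  have hlow : #{x : Fin n | (x : ℕ) < m} = m := by
    rw [Fin.card_filter_val_lt, min_eq_right hm]
  have hhigh : #{x : Fin n | m ≤ (x : ℕ)} = n - m := by
    have := card_filter_add_card_filter_not (s := univ) fun x : Fin n => (x : ℕ) < m
    simp only [not_lt, card_univ, Fintype.card_fin, hlow] at this
    omega
  have hprod : #{p : Fin n × Fin n | (p.1 : ℕ) < m ∧ m ≤ (p.2 : ℕ)} =
      #{x : Fin n | (x : ℕ) < m} * #{x : Fin n | m ≤ (x : ℕ)} := by
    rw [← card_product]
    congr 1
    ext
    simp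
  rw [hcross, hprod, hlow, hhigh]

end Rotation

theorem max_downDeg_general {n : ℕ} (π : Equiv.Perm (Fin n))
    (hπ : ∀ i : Fin n, (π i : ℕ) = ((i : ℕ) + n / 2) % n) :
    downDeg π = n ^ 2 / 4 ∧ ∀ σ : Equiv.Perm (Fin n), downDeg σ ≤ n ^ 2 / 4 :=
  ⟨(downDeg_rotation (Nat.div_le_self n 2) hπ).trans (Nat.div_two_mul_sub_div_two n), downDeg_le⟩

/-- The maximum down degree on the symmetric group is n²/4 rounded down, attained at
the permutation [n/2+1, ..., n, 1, ..., n/2] (0-indexed: i ↦ (i + n/2) mod n). -/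
theorem max_downDeg {n : ℕ} (hn : 0 < n) (π : Equiv.Perm (Fin n))
    (hπ : ∀ i : Fin n, (π i : ℕ) = ((i : ℕ) + n / 2) % n) :
    downDeg π = n ^ 2 / 4 ∧ ∀ σ : Equiv.Perm (Fin n), downDeg σ ≤ n ^ 2 / 4 :=
  max_downDeg_general π hπ
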